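/- For all interactions a, b over act(P) ∪ fire(P) ∪ inhib(P) with firesup(b) = ∅, the trees a → b and a are equivalent: a → b ∼ a. -/

import Mathlib

/-- Typed ports: activation, firing and negative copies of the port set `P`. -/
inductive TPort (P : Type) : Type
  | act : P → TPort P
  | fire : P → TPort P
  | inhib : P → TPort P

/-- Firing support of an interaction. -/
def firesup {P : Type} (a : Set (TPort P)) : Set P := {p | TPort.fire p ∈ a}

/-- Activation support of an interaction. -/
def actsup {P : Type} (a : Set (TPort P)) : Set P := {p | TPort.act p ∈ a}

/-- Negative support of an interaction. -/
def negsup {P : Type} (a : Set (TPort P)) : Set P := {p | TPort.inhib p ∈ a}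

/-- A behaviour: an LTS with an offer predicate; the transitions labelled by the
empty interaction are exactly the self-loops, and every port occurring on a
transition from a state is offered in that state. -/
structure Behaviour (P : Type) : Type 1 where
  State : Type
  ports : Set P
  tr : State → Set P → State → Prop
  off : State → P → Prop
  tr_sub : ∀ {q a q'}, tr q a q' → a ⊆ ports
  tr_empty : ∀ q q', tr q ∅ q' ↔ q' = q
  off_of_tr : ∀ {q a q' p}, tr q a q' → p ∈ a → off q p

/-- Transition relation of the composition `γ(B₁,…,Bₙ)` (including the empty
self-loops, present in every behaviour by the standing assumption). -/
def compTr {P ι : Type} (B : ι → Behaviour P) (γ : Set (Set (TPort P)))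
    (q : ∀ i, (B i).State) (b : Set P) (q' : ∀ i, (B i).State) : Prop :=
  (b = ∅ ∧ q' = q) ∨
  ∃ a ∈ γ, b = firesup a ∧ ∀ i,
    (B i).tr (q i) (firesup a ∩ (B i).ports) (q' i) ∧
    (∀ p ∈ actsup a ∩ (B i).ports, (B i).off (q i) p) ∧
    (∀ p ∈ negsup a ∩ (B i).ports, ¬ (B i).off (q i) p)

/-- Offer predicate of the composition `γ(B₁,…,Bₙ)`. -/
def compOff {P ι : Type} (B : ι → Behaviour P)
    (q : ∀ i, (B i).State) (p : P) : Prop :=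
  ∃ i, p ∈ (B i).ports ∧ (B i).off (q i) p

/-- Two sets of interactions are equivalent iff they induce the same composed
behaviour on every finite family of behaviours whose port sets partition `P`. -/
def EquivInter (P : Type) (γ₁ γ₂ : Set (Set (TPort P))) : Prop :=
  ∀ (ι : Type) [Finite ι] (B : ι → Behaviour P),
    Pairwise (fun i j => Disjoint (B i).ports (B j).ports) →
    (⋃ i, (B i).ports) = Set.univ →
    compTr B γ₁ = compTr B γ₂

/-- Causal interaction trees over the typed ports of `P`
(`zero` is the constant 0; the constant 1 is the empty interaction `∅`). -/
inductive CITree (P : Type) : Type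
  | zero : CITree P
  | node : Set (TPort P) → CITree P
  | arrow : Set (TPort P) → CITree P → CITree P
  | par : CITree P → CITree P → CITree P

/-- Interaction semantics of causal interaction trees. -/
def sem {P : Type} : CITree P → Set (Set (TPort P))
  | CITree.zero => ∅
  | CITree.node a => {a}
  | CITree.arrow a t => {a} ∪ {c | ∃ b ∈ sem t, c = a ∪ b}
  | CITree.par t₁ t₂ =>
      sem t₁ ∪ sem t₂ ∪ {c | ∃ b₁ ∈ sem t₁, ∃ b₂ ∈ sem t₂, c = b₁ ∪ b₂}

/-- Equivalence of causal interaction trees. -/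
def treeEquiv {P : Type} (t₁ t₂ : CITree P) : Prop :=
  EquivInter P (sem t₁) (sem t₂)

theorem firesup_union {P : Type} (a b : Set (TPort P)) :
    firesup (a ∪ b) = firesup a ∪ firesup b := rfl

theorem actsup_mono {P : Type} {a c : Set (TPort P)} (h : a ⊆ c) : actsup a ⊆ actsup c :=
  fun _ hp => h hp

theorem negsup_mono {P : Type} {a c : Set (TPort P)} (h : a ⊆ c) : negsup a ⊆ negsup c :=
  fun _ hp => h hp

theorem sem_arrow_node {P : Type} (a b : Set (TPort P)) :
    sem (CITree.arrow a (CITree.node b)) = insert (a ∪ b) {a} := by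
  ext c
  simp only [sem, Set.mem_union, Set.mem_singleton_iff, Set.mem_ofPred_eq, exists_eq_left,
    Set.mem_insert_iff]
  tauto

theorem compTr_mono {P ι : Type} (B : ι → Behaviour P) {γ₁ γ₂ : Set (Set (TPort P))}
    (h : γ₁ ⊆ γ₂) : compTr B γ₁ ≤ compTr B γ₂ := by
  rintro q c q' (hidle | ⟨x, hx, hc, hall⟩)
  · exact Or.inl hidle
  · exact Or.inr ⟨x, h hx, hc, hall⟩

/-- Enlarging `a` without firing more ports only adds offer constraints. -/
theorem compTr_insert_of_subset {P ι : Type} (B : ι → Behaviour P) {γ : Set (Set (TPort P))}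
    {a c : Set (TPort P)} (ha : a ∈ γ) (hac : a ⊆ c) (hfire : firesup c = firesup a) :
    compTr B (insert c γ) = compTr B γ := by
  refine le_antisymm ?_ (compTr_mono B (Set.subset_insert c γ))
  rintro q e q' (hidle | ⟨x, hx, he, hall⟩)
  · exact Or.inl hidle
  rcases hx with rfl | hx
  · refine Or.inr ⟨a, ha, hfire ▸ he, fun i => ?_⟩
    obtain ⟨htr, hoff, hinhib⟩ := hall i
    exact ⟨hfire ▸ htr, fun p hp => hoff p ⟨actsup_mono hac hp.1, hp.2⟩,
      fun p hp => hinhib p ⟨negsup_mono hac hp.1, hp.2⟩⟩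
  · exact Or.inr ⟨x, hx, he, hall⟩

/-- If `firesup b = ∅` then the trees `a → b` and `a` are
equivalent. -/
theorem stmt7 {P : Type} (a b : Set (TPort P)) (hb : firesup b = ∅) :
    treeEquiv (CITree.arrow a (CITree.node b)) (CITree.node a) := by
  intro ι _ B _ _
  rw [sem_arrow_node, sem]
  exact compTr_insert_of_subset B rfl Set.subset_union_left
    (by rw [firesup_union, hb, Set.union_empty])
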